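/- arXiv:1112.0395 — 2 statements merged into one kernel-verified Lean document; each statement's English description precedes it below -/
import Mathlib

section
/- Let K > 1. Then the equation m = tanh(K·m) has exactly three real solutions: they are 0, m* and −m*, where m* is the unique solution in the open interval (0,1). -/
/-!
For `m > 0`, the equation `m = tanh (K m)` says that the strictly concave function `tanh` on
`[0, ∞)` meets the line `u ↦ u / K` at `u = K m`. A strictly concave function with `f 0 ≥ 0` meets
a line through the origin at most once in `(0, ∞)` (its secant slopes from `0` strictly decrease),
which gives uniqueness. Existence is the intermediate value theorem for `tanh (K x) - x` on `(0, 1]`: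
it is positive near `0` because `tanh (K x)` has slope `K > 1` there, and negative at `1` because
`tanh < 1`. Oddness of `tanh` turns the negative solutions into positive ones.
-/

open Real Set Filter Topology

namespace Real

theorem hasDerivAt_tanh (x : ℝ) : HasDerivAt tanh (cosh x ^ 2)⁻¹ x := by
  have h := (hasDerivAt_sinh x).div (hasDerivAt_cosh x) (cosh_pos x).ne'
  rw [show tanh = sinh / cosh from funext tanh_eq_sinh_div_cosh]
  refine h.congr_deriv ?_
  rw [← sq, ← sq, cosh_sq_sub_sinh_sq, one_div]

@[fun_prop]
theorem continuous_tanh : Continuous tanh :=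
  continuous_iff_continuousAt.2 fun x => (hasDerivAt_tanh x).continuousAt

theorem strictConcaveOn_tanh : StrictConcaveOn ℝ (Ici 0) tanh := by
  refine StrictAntiOn.strictConcaveOn_of_deriv (convex_Ici 0) continuous_tanh.continuousOn ?_
  rw [interior_Ici]
  intro x hx y hy hxy
  simp only [(hasDerivAt_tanh _).deriv]
  have hcosh : cosh x < cosh y := cosh_strictMonoOn (mem_Ioi.1 hx).le (mem_Ioi.1 hy).le hxy
  gcongr

end Real

theorem HasDerivAt.exists_mem_Ioo_lt {f : ℝ → ℝ} {f' a b r : ℝ} (hf : HasDerivAt f f' a)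
    (hr : r < f') (hab : a < b) : ∃ x ∈ Ioo a b, f a + r * (x - a) < f x := by
  have hslope : ∀ᶠ t in 𝓝[>] 0, r < t⁻¹ • (f (a + t) - f a) :=
    hf.tendsto_slope_zero_right.eventually (lt_mem_nhds hr)
  obtain ⟨t, ht, hrt⟩ := (Filter.Eventually.and (Ioo_mem_nhdsGT (sub_pos.2 hab)) hslope).exists
  refine ⟨a + t, ⟨by linarith [ht.1], by linarith [ht.2]⟩, ?_⟩
  rw [smul_eq_mul, inv_mul_eq_div, lt_div_iff₀ ht.1] at hrt
  linarith

theorem StrictConcaveOn.eq_of_apply_eq_mul {f : ℝ → ℝ} (hf : StrictConcaveOn ℝ (Ici 0) f)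
    (h0 : 0 ≤ f 0) {c a b : ℝ} (ha : 0 < a) (hb : 0 < b) (hfa : f a = c * a)
    (hfb : f b = c * b) : a = b := by
  wlog hab : a < b generalizing a b
  · rcases (not_lt.1 hab).lt_or_eq with hba | hba
    · exact (this hb ha hfb hfa hba).symm
    · exact hba.symm
  have hsecant := hf.secant_strict_mono self_mem_Ici ha.le hb.le ha.ne' hb.ne' hab
  rw [hfa, hfb, sub_zero, sub_zero, sub_div, sub_div, mul_div_cancel_right₀ _ ha.ne',
    mul_div_cancel_right₀ _ hb.ne', sub_lt_sub_iff_left] at hsecant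
  exact absurd hsecant (not_lt.2 (div_le_div_of_nonneg_left h0 ha hab.le))

theorem eq_of_eq_tanh_mul {K a b : ℝ} (hK : 0 < K) (ha : 0 < a) (hb : 0 < b)
    (hfa : a = tanh (K * a)) (hfb : b = tanh (K * b)) : a = b := by
  have hline : ∀ {x}, x = tanh (K * x) → tanh (K * x) = K⁻¹ * (K * x) := fun hx => by
    rw [← hx, inv_mul_cancel_left₀ hK.ne']
  have := strictConcaveOn_tanh.eq_of_apply_eq_mul tanh_zero.ge (mul_pos hK ha) (mul_pos hK hb)
    (hline hfa) (hline hfb)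
  exact mul_left_cancel₀ hK.ne' this

theorem exists_mem_Ioo_eq_tanh_mul {K : ℝ} (hK : 1 < K) : ∃ m ∈ Ioo 0 1, m = tanh (K * m) := by
  have hK0 : 0 < K := by linarith
  -- `tanh` has slope `1 > K⁻¹` at the origin, so `tanh (K x) > x` for small `x > 0`.
  have hderiv := hasDerivAt_tanh 0
  rw [cosh_zero, one_pow, inv_one] at hderiv
  obtain ⟨u, hu, hlt⟩ := hderiv.exists_mem_Ioo_lt (inv_lt_one_of_one_lt₀ hK) hK0
  simp only [tanh_zero, zero_add, sub_zero] at hlt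
  set x₀ := K⁻¹ * u
  have hx₀ : x₀ ∈ Ioo 0 1 :=
    ⟨mul_pos (inv_pos.2 hK0) hu.1, by rw [inv_mul_lt_iff₀ hK0, mul_one]; exact hu.2⟩
  have hgx₀ : 0 < tanh (K * x₀) - x₀ := by
    simp only [x₀, mul_inv_cancel_left₀ hK0.ne']; linarith
  have hg1 : tanh (K * 1) - 1 < 0 := by linarith [tanh_lt_one (K * 1)]
  have hcont : ContinuousOn (fun x => tanh (K * x) - x) (Icc x₀ 1) := by fun_prop
  obtain ⟨m, hm, hgm⟩ := intermediate_value_Ioo' hx₀.2.le hcont ⟨hg1, hgx₀⟩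
  exact ⟨m, ⟨hx₀.1.trans hm.1, hm.2⟩, (sub_eq_zero.1 hgm).symm⟩

/-- For `K > 1`, the zero-field Curie–Weiss equation `m = tanh(K m)` has exactly
three real solutions: `0`, `m*` and `-m*`, where `m*` is the unique solution in `(0,1)`. -/
theorem curie_weiss_three_solutions
    (K : ℝ) (hK : 1 < K) :
    ∃ mstar : ℝ, mstar ∈ Set.Ioo (0 : ℝ) 1 ∧
      mstar = Real.tanh (K * mstar) ∧
      (∀ x ∈ Set.Ioo (0 : ℝ) 1, x = Real.tanh (K * x) → x = mstar) ∧
      {m : ℝ | m = Real.tanh (K * m)} = {0, mstar, -mstar} := by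
  have hK0 : 0 < K := by linarith
  obtain ⟨m, hm, hfix⟩ := exists_mem_Ioo_eq_tanh_mul hK
  have huniq : ∀ x, 0 < x → x = tanh (K * x) → x = m := fun x hx hfx =>
    eq_of_eq_tanh_mul hK0 hx hm.1 hfx hfix
  refine ⟨m, hm, hfix, fun x hx => huniq x hx.1, ?_⟩
  have hneg : ∀ x, x = tanh (K * x) ↔ -x = tanh (K * -x) := fun x => by
    rw [mul_neg, tanh_neg, neg_inj]
  ext y
  simp only [mem_ofPred_eq, mem_insert_iff, mem_singleton_iff]
  constructor
  · intro hy
    rcases lt_trichotomy y 0 with hy0 | hy0 | hy0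
    · exact Or.inr (Or.inr (neg_eq_iff_eq_neg.1 (huniq (-y) (neg_pos.2 hy0) ((hneg y).1 hy))))
    · exact Or.inl hy0
    · exact Or.inr (Or.inl (huniq y hy0 hy))
  · rintro (rfl | rfl | rfl)
    · rw [mul_zero, tanh_zero]
    · exact hfix
    · exact (hneg m).1 hfix
end

section
/- For each h > 0 the equation m = tanh(m + h) has exactly one real solution μ(h), and μ(h) ∈ (0,1). Moreover lim_{h→0⁺} μ(h)/(3h)^{1/3} = 1; that is, at the critical point the magnetization of the Curie–Weiss model vanishes with the external field with the classical critical exponent 1/3. -/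
/-!
A solution of `m = tanh (m + h)` lies in `(-1, 1)`, where the equation reads `artanh m - m = h`.
Comparing derivatives, `m² / (1 - m²)` against `m²` and against the derivative of
`m³ / (3 (1 - m²))`, shows that `m³ / 3 ≤ artanh m - m ≤ m³ / (3 (1 - m²))` on `[0, 1)` and that
`artanh m - m` is strictly increasing on `(-1, 1)`, which gives uniqueness and `m > 0`.
Hence `3h (1 - m²) ≤ m³ ≤ 3h`, so `m / (3h)^{1/3}` is squeezed between `1 - (3h)^{2/3}` and `1`.
-/

open Real Filter Set

theorem Real.hasDerivAt_artanh {x : ℝ} (hx : x ∈ Ioo (-1) 1) :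
    HasDerivAt artanh (1 / (1 - x ^ 2)) x := by
  have h1 : 0 < 1 + x := by linarith [hx.1]
  have h2 : 0 < 1 - x := by linarith [hx.2]
  have hlog : HasDerivAt (fun y => 1 / 2 * log ((1 + y) / (1 - y))) (1 / (1 - x ^ 2)) x := by
    have hq := ((hasDerivAt_id' x).const_add 1).div ((hasDerivAt_id' x).const_sub 1) h2.ne'
    refine ((hq.log (div_pos h1 h2).ne').const_mul (1 / 2)).congr_deriv ?_
    have hx2 : 1 - x ^ 2 ≠ 0 := by nlinarith
    simp only [Pi.div_apply]
    field_simp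
    ring
  refine hlog.congr_of_eventuallyEq ?_
  filter_upwards [Icc_mem_nhds hx.1 hx.2] with y hy using artanh_eq_half_log hy

theorem monotoneOn_of_hasDerivAt_nonneg {D : Set ℝ} (hD : Convex ℝ D) (hDo : IsOpen D)
    {f f' : ℝ → ℝ} (hf : ∀ x ∈ D, HasDerivAt f (f' x) x) (hf' : ∀ x ∈ D, 0 ≤ f' x) :
    MonotoneOn f D := by
  refine monotoneOn_of_hasDerivWithinAt_nonneg (f' := f') hD
    (fun x hx => (hf x hx).continuousAt.continuousWithinAt) (fun x hx => ?_) (fun x hx => ?_)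
  · rw [hDo.interior_eq] at hx ⊢
    exact (hf x hx).hasDerivWithinAt
  · rw [hDo.interior_eq] at hx
    exact hf' x hx

theorem monotoneOn_artanh_sub_self_sub_cube :
    MonotoneOn (fun x => artanh x - x - x ^ 3 / 3) (Ioo (-1) 1) := by
  refine monotoneOn_of_hasDerivAt_nonneg (convex_Ioo _ _) isOpen_Ioo
    (f' := fun x => x ^ 4 / (1 - x ^ 2)) (fun x hx => ?_) (fun x hx => ?_)
  · have hx2 : 1 - x ^ 2 ≠ 0 := by nlinarith [hx.1, hx.2]
    refine (((hasDerivAt_artanh hx).sub (hasDerivAt_id' x)).sub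
      ((hasDerivAt_pow 3 x).div_const 3)).congr_deriv ?_
    field_simp
    ring
  · have : 0 < 1 - x ^ 2 := by nlinarith [hx.1, hx.2]
    positivity

theorem monotoneOn_cube_div_sub_artanh_add_self :
    MonotoneOn (fun x => x ^ 3 / (3 * (1 - x ^ 2)) - (artanh x - x)) (Ioo (-1) 1) := by
  refine monotoneOn_of_hasDerivAt_nonneg (convex_Ioo _ _) isOpen_Ioo
    (f' := fun x => 2 * x ^ 4 / (3 * (1 - x ^ 2) ^ 2)) (fun x hx => ?_) (fun x hx => ?_)
  · have hx2 : 1 - x ^ 2 ≠ 0 := by nlinarith [hx.1, hx.2]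
    have hden : HasDerivAt (fun y : ℝ => 3 * (1 - y ^ 2)) (3 * -(2 * x ^ 1)) x :=
      ((hasDerivAt_pow 2 x).const_sub 1).const_mul 3
    refine (((hasDerivAt_pow 3 x).div hden (by positivity)).sub
      ((hasDerivAt_artanh hx).sub (hasDerivAt_id' x))).congr_deriv ?_
    field_simp
    ring
  · positivity

theorem strictMonoOn_artanh_sub_self : StrictMonoOn (fun x => artanh x - x) (Ioo (-1) 1) := by
  have hcube : StrictMonoOn (fun x : ℝ => x ^ 3 / 3) (Ioo (-1) 1) := fun x _ y _ hxy => by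
    have := Odd.strictMono_pow (R := ℝ) (by decide : Odd 3) hxy
    dsimp only
    linarith
  simpa using monotoneOn_artanh_sub_self_sub_cube.add_strictMono hcube

theorem cube_div_three_le_artanh_sub_self {x : ℝ} (hx0 : 0 ≤ x) (hx1 : x < 1) :
    x ^ 3 / 3 ≤ artanh x - x := by
  have := monotoneOn_artanh_sub_self_sub_cube (by norm_num : (0 : ℝ) ∈ Ioo (-1) 1)
    ⟨by linarith, hx1⟩ hx0
  simp only [artanh_zero] at this
  linarith

theorem artanh_sub_self_le_cube_div {x : ℝ} (hx0 : 0 ≤ x) (hx1 : x < 1) :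
    artanh x - x ≤ x ^ 3 / (3 * (1 - x ^ 2)) := by
  have := monotoneOn_cube_div_sub_artanh_add_self (by norm_num : (0 : ℝ) ∈ Ioo (-1) 1)
    ⟨by linarith, hx1⟩ hx0
  simp only [artanh_zero] at this
  linarith

theorem artanh_sub_self_eq_of_eq_tanh {m h : ℝ} (hm : m = tanh (m + h)) : artanh m - m = h := by
  rw [hm, artanh_tanh, ← hm]
  ring

theorem mem_Ioo_of_eq_tanh {m h : ℝ} (hm : m = tanh (m + h)) : m ∈ Ioo (-1) 1 :=
  hm ▸ ⟨neg_one_lt_tanh _, tanh_lt_one _⟩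

theorem pos_of_eq_tanh {m h : ℝ} (hh : 0 < h) (hm : m = tanh (m + h)) : 0 < m := by
  by_contra! hm0
  have := strictMonoOn_artanh_sub_self.monotoneOn (mem_Ioo_of_eq_tanh hm)
    (by norm_num : (0 : ℝ) ∈ Ioo (-1) 1) hm0
  simp only [artanh_zero, sub_zero, artanh_sub_self_eq_of_eq_tanh hm] at this
  linarith

theorem exists_eq_tanh {h : ℝ} (hh : 0 ≤ h) : ∃ m, m = tanh (m + h) := by
  -- At `b = tanh (1 + h)` the function `artanh m - m` already takes the value `1 + h - b > h`.
  set b := tanh (1 + h)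
  have hb : b ∈ Ioo (-1) 1 := ⟨neg_one_lt_tanh _, tanh_lt_one _⟩
  have hb0 : 0 ≤ b := by
    by_contra! hb0
    have := artanh_nonpos hb0.le
    rw [artanh_tanh] at this
    linarith
  have hcont : ContinuousOn (fun x => artanh x - x) (Icc 0 b) := fun x hx =>
    ((hasDerivAt_artanh ⟨by linarith [hx.1], hx.2.trans_lt hb.2⟩).continuousAt.sub
      continuousAt_id).continuousWithinAt
  have hgb : h ≤ artanh b - b := by
    rw [artanh_tanh]
    linarith [tanh_lt_one (1 + h)]
  obtain ⟨m, hmb, hm⟩ := intermediate_value_Icc hb0 hcont ⟨by simpa using hh, hgb⟩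
  refine ⟨m, ?_⟩
  have hm' : artanh m = m + h := by simp only at hm; linarith
  rw [← hm', tanh_artanh ⟨by linarith [hmb.1], hmb.2.trans_lt hb.2⟩]

theorem cube_bounds_of_eq_tanh {m h : ℝ} (hm0 : 0 ≤ m) (hm : m = tanh (m + h)) :
    3 * h * (1 - m ^ 2) ≤ m ^ 3 ∧ m ^ 3 ≤ 3 * h := by
  have hm1 := (mem_Ioo_of_eq_tanh hm).2
  have hlo := cube_div_three_le_artanh_sub_self hm0 hm1
  have hhi := artanh_sub_self_le_cube_div hm0 hm1
  rw [artanh_sub_self_eq_of_eq_tanh hm] at hlo hhi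
  have : 0 < 1 - m ^ 2 := by nlinarith
  rw [le_div_iff₀ (by positivity)] at hhi
  constructor <;> linarith

theorem div_mem_Icc_of_cube_bounds {m t : ℝ} (hm : 0 ≤ m) (ht : 0 < t)
    (hlo : t ^ 3 * (1 - m ^ 2) ≤ m ^ 3) (hhi : m ^ 3 ≤ t ^ 3) : m / t ∈ Icc (1 - t ^ 2) 1 := by
  have hmt : m ≤ t := (pow_le_pow_iff_left₀ hm ht.le (by norm_num)).mp hhi
  have hr0 : 0 ≤ m / t := div_nonneg hm ht.le
  have hr1 : m / t ≤ 1 := (div_le_one ht).mpr hmt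
  refine ⟨?_, hr1⟩
  calc 1 - t ^ 2 ≤ 1 - m ^ 2 := by nlinarith
    _ ≤ (m / t) ^ 3 := by rw [div_pow, le_div_iff₀ (by positivity)]; linarith
    _ ≤ m / t := pow_le_of_le_one hr0 hr1 (by norm_num)

theorem div_rpow_mem_Icc_of_eq_tanh {m h : ℝ} (hh : 0 < h) (hm : m = tanh (m + h)) :
    m / (3 * h) ^ ((1 : ℝ) / 3) ∈ Icc (1 - ((3 * h) ^ ((1 : ℝ) / 3)) ^ 2) 1 := by
  have hcube : ((3 * h) ^ ((1 : ℝ) / 3)) ^ 3 = 3 * h := by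
    rw [← rpow_natCast, ← rpow_mul (by positivity)]
    norm_num
  have hm0 := (pos_of_eq_tanh hh hm).le
  obtain ⟨hlo, hhi⟩ := cube_bounds_of_eq_tanh hm0 hm
  rw [← hcube] at hlo hhi
  exact div_mem_Icc_of_cube_bounds hm0 (by positivity) hlo hhi

/-- Classical critical isotherm exponent `δ = 3` of the Curie–Weiss model: for each
`h > 0` the equation `m = tanh(m + h)` has exactly one real solution, it lies in
`(0,1)`, and any selection `μ(h)` of solutions satisfies `μ(h)/(3h)^{1/3} → 1`
as `h → 0⁺`. -/
theorem curie_weiss_critical_isotherm :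
    (∀ h : ℝ, 0 < h → ∃! m : ℝ, m = Real.tanh (m + h)) ∧
      (∀ h : ℝ, 0 < h → ∀ m : ℝ, m = Real.tanh (m + h) → m ∈ Set.Ioo (0 : ℝ) 1) ∧
      ∀ μ : ℝ → ℝ, (∀ h : ℝ, 0 < h → μ h = Real.tanh (μ h + h)) →
        Tendsto (fun h : ℝ => μ h / (3 * h) ^ ((1 : ℝ) / 3))
          (nhdsWithin 0 (Set.Ioi 0)) (nhds 1) := by
  refine ⟨fun h hh => ?_, fun h hh m hm => ⟨pos_of_eq_tanh hh hm, (mem_Ioo_of_eq_tanh hm).2⟩,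
    fun μ hμ => ?_⟩
  · obtain ⟨m, hm⟩ := exists_eq_tanh hh.le
    refine ⟨m, hm, fun m' hm' => strictMonoOn_artanh_sub_self.injOn (mem_Ioo_of_eq_tanh hm')
      (mem_Ioo_of_eq_tanh hm) ?_⟩
    simp only [artanh_sub_self_eq_of_eq_tanh hm, artanh_sub_self_eq_of_eq_tanh hm']
  have hbounds h (hh : h ∈ Ioi (0 : ℝ)) := div_rpow_mem_Icc_of_eq_tanh hh (hμ h hh)
  have hroot : Tendsto (fun h : ℝ => (3 * h) ^ ((1 : ℝ) / 3)) (nhdsWithin 0 (Ioi 0)) (nhds 0) := by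
    have hcont : Continuous fun h : ℝ => (3 * h) ^ ((1 : ℝ) / 3) :=
      (continuous_const_mul 3).rpow_const fun _ => Or.inr (by norm_num)
    simpa using (hcont.tendsto 0).mono_left nhdsWithin_le_nhds
  refine tendsto_of_tendsto_of_tendsto_of_le_of_le' ?_ tendsto_const_nhds
    (eventually_nhdsWithin_of_forall fun h hh => (hbounds h hh).1)
    (eventually_nhdsWithin_of_forall fun h hh => (hbounds h hh).2)
  simpa using (hroot.pow 2).const_sub 1
end
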